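/- arXiv:math/9305201 — 5 statements merged into one kernel-verified Lean document; each statement's English description precedes it below -/
import Mathlib

section
/- The elements aᵢ = 1+ξᵢ (i = 1,...,q) generate a free subgroup of rank q of the group of units of the ring R of formal power series in non-commuting indeterminates ξ₁,...,ξ_q over ℚ; that is, the homomorphism from the free group of rank q sending the i-th generator to 1+ξᵢ is injective. -/
/-- The ring `R` of formal power series with rational coefficients in the
non-commuting indeterminates `ξ₁, …, ξ_q`, realized as power series in a central
grading variable with coefficients in the free (noncommutative) `ℚ`-algebra on
`q` generators. -/
abbrev MagnusRing (q : ℕ) : Type := PowerSeries (FreeAlgebra ℚ (Fin q))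

/-- The indeterminate `ξᵢ`, a homogeneous element of degree 1. -/
noncomputable def xi {q : ℕ} (i : Fin q) : MagnusRing q :=
  PowerSeries.mk fun n => if n = 1 then FreeAlgebra.ι ℚ i else 0

namespace Magnus

open List PowerSeries

variable {q : ℕ}

/-- coefficient of `ξ^a` in the factor with sign `b` -/
def gam (b : Bool) (a : ℕ) : ℚ := if b then (if a ≤ 1 then 1 else 0) else (-1)^a

/-- the series `(1+ξᵢ)^{±1}` -/
noncomputable def factor (x : Fin q × Bool) : MagnusRing q :=
  PowerSeries.mk fun n => gam x.2 n • ((FreeAlgebra.ι ℚ x.1) ^ n)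

noncomputable def E (q : ℕ) : FreeAlgebra ℚ (Fin q) ≃ₐ[ℚ] MonoidAlgebra ℚ (FreeMonoid (Fin q)) :=
  FreeAlgebra.equivMonoidAlgebraFreeMonoid

/-- coefficient of the word `u` (in degree `u.length`) -/
noncomputable def psi (u : List (Fin q)) (f : MagnusRing q) : ℚ :=
  (E q (PowerSeries.coeff (R := FreeAlgebra ℚ (Fin q)) u.length f)).coeff (FreeMonoid.ofList u)

lemma E_iota (i : Fin q) :
    E q (FreeAlgebra.ι ℚ i) = MonoidAlgebra.single (FreeMonoid.of i) 1 := by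
  simp [E, FreeAlgebra.equivMonoidAlgebraFreeMonoid, MonoidAlgebra.of_apply]

lemma ofList_replicate (i : Fin q) (a : ℕ) :
    (FreeMonoid.of i) ^ a = FreeMonoid.ofList (List.replicate a i) := by
  induction a with
  | zero => rfl
  | succ n ih =>
      rw [pow_succ']
      rw [List.replicate_succ]
      rw [show FreeMonoid.ofList (i :: List.replicate n i)
          = FreeMonoid.of i * FreeMonoid.ofList (List.replicate n i) from rfl, ih]

lemma E_iota_pow (i : Fin q) (a : ℕ) :
    E q ((FreeAlgebra.ι ℚ i) ^ a)
      = MonoidAlgebra.single (FreeMonoid.ofList (List.replicate a i)) 1 := by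
  rw [map_pow, E_iota, MonoidAlgebra.single_pow, one_pow, ofList_replicate]

lemma single_mul_apply_of_ne {G : Type*} [Monoid G]
    (f : MonoidAlgebra ℚ G) (r : ℚ) (x y : G) (H : ∀ a, x * a ≠ y) :
    (MonoidAlgebra.single x r * f).coeff y = 0 := by
  exact MonoidAlgebra.coeff_single_mul_of_forall_mul_ne _ _ H

lemma key_eval (i : Fin q) (a : ℕ) (u : List (Fin q)) (h : MonoidAlgebra ℚ (FreeMonoid (Fin q)))
    (ha : a ≤ u.length) :
    (MonoidAlgebra.single (FreeMonoid.ofList (List.replicate a i)) (1:ℚ) * h).coeff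
      (FreeMonoid.ofList u)
      = if u.take a = List.replicate a i then h.coeff (FreeMonoid.ofList (u.drop a)) else 0 := by
  classical
  by_cases hc : u.take a = List.replicate a i
  · rw [if_pos hc]
    rw [MonoidAlgebra.coeff_single_mul_eq_mul_coeff (FreeMonoid.ofList (u.drop a)), one_mul]
    intro z _
    constructor
    · intro hz
      have hz' : List.replicate a i ++ FreeMonoid.toList z = u := by
        have := congrArg FreeMonoid.toList hz
        simpa using this
      have : FreeMonoid.toList z = u.drop a := by
        have hu : u = u.take a ++ u.drop a := (List.take_append_drop a u).symm
        rw [hc] at hu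
        exact List.append_cancel_left (hz'.trans hu)
      rw [← this, FreeMonoid.ofList_toList]
    · rintro rfl
      have : List.replicate a i ++ u.drop a = u := by
        conv_rhs => rw [← List.take_append_drop a u, hc]
      have h2 : FreeMonoid.toList (FreeMonoid.ofList (List.replicate a i) *
          FreeMonoid.ofList (u.drop a)) = u := by simpa using this
      have := congrArg FreeMonoid.ofList h2
      simpa [FreeMonoid.ofList_toList] using this
  · rw [if_neg hc]
    apply single_mul_apply_of_ne
    intro z hz
    apply hc
    have hz' : List.replicate a i ++ FreeMonoid.toList z = u := by
      have := congrArg FreeMonoid.toList hz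
      simpa using this
    have : u.take a = (List.replicate a i ++ FreeMonoid.toList z).take a := by rw [hz']
    rw [this, List.take_append, List.take_replicate,
        List.length_replicate, Nat.sub_self, List.take_zero, List.append_nil,
        min_self]

lemma coeff_factor (x : Fin q × Bool) (a : ℕ) :
    PowerSeries.coeff (R := FreeAlgebra ℚ (Fin q)) a (factor x)
      = gam x.2 a • ((FreeAlgebra.ι ℚ x.1) ^ a) := by
  simp [factor]

/-- The fundamental step lemma. -/
lemma psi_factor_mul (x : Fin q × Bool) (g : MagnusRing q) (u : List (Fin q)) :
    psi u (factor x * g)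
      = ∑ a ∈ Finset.range (u.length + 1),
          gam x.2 a * (if u.take a = List.replicate a x.1
            then psi (u.drop a) g else 0) := by
  classical
  rw [psi, PowerSeries.coeff_mul, Finset.Nat.sum_antidiagonal_eq_sum_range_succ_mk,
      map_sum, MonoidAlgebra.coeff_sum, Finsupp.finset_sum_apply]
  apply Finset.sum_congr rfl
  intro a ha
  have ha' : a ≤ u.length := Nat.lt_succ_iff.mp (Finset.mem_range.mp ha)
  rw [coeff_factor, map_mul, map_smul, smul_mul_assoc, MonoidAlgebra.coeff_smul_apply, E_iota_pow,
      key_eval _ _ _ _ ha', smul_eq_mul]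
  congr 1
  by_cases hc : u.take a = List.replicate a x.1
  · rw [if_pos hc, if_pos hc, psi]
    congr 2
    simp
  · rw [if_neg hc, if_neg hc]

def val : List (Fin q × Bool) → List (Fin q) → ℚ
  | [], u => if u = [] then 1 else 0
  | (x :: L), u => ∑ a ∈ Finset.range (u.length + 1),
      gam x.2 a * (if u.take a = List.replicate a x.1 then val L (u.drop a) else 0)

lemma psi_one (u : List (Fin q)) : psi u (1 : MagnusRing q) = if u = [] then 1 else 0 := by
  classical
  rw [psi, PowerSeries.coeff_one]
  by_cases hu : u = []
  · subst hu
    simp [MonoidAlgebra.one_def]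
    try rfl
  · rw [if_neg (by simpa [List.length_eq_zero_iff] using hu), if_neg hu]
    simp

lemma psi_prod (L : List (Fin q × Bool)) (u : List (Fin q)) :
    psi u ((L.map factor).prod) = val L u := by
  induction L generalizing u with
  | nil => simpa [val] using psi_one u
  | cons x L ih =>
      rw [List.map_cons, List.prod_cons, psi_factor_mul, val]
      apply Finset.sum_congr rfl
      intro a _
      by_cases hc : u.take a = List.replicate a x.1 <;> simp [hc, ih]

/-! ### Combinatorial part -/

def Red (L : List (Fin q × Bool)) : Prop :=
  List.Chain' (fun p r => ¬(p.1 = r.1 ∧ p.2 = !r.2)) L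

def Wd (L : List (Fin q × Bool)) : List (Fin q) := L.map Prod.fst

def Nneg (L : List (Fin q × Bool)) : ℕ := L.countP (fun p => !p.2)

def Bad : List (Fin q × Bool) → List (Fin q) → Prop
  | [], v => v ≠ []
  | (x :: _), v => ¬(v = List.replicate v.length x.1 ∧ (v = [] ∨ x.2 = false))

lemma val_nil (u : List (Fin q)) : val ([] : List (Fin q × Bool)) u = if u = [] then 1 else 0 := rfl

lemma val_cons (x : Fin q × Bool) (L : List (Fin q × Bool)) (u : List (Fin q)) :
    val (x :: L) u = ∑ a ∈ Finset.range (u.length + 1),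
      gam x.2 a * (if u.take a = List.replicate a x.1 then val L (u.drop a) else 0) := rfl

lemma Wd_cons (x : Fin q × Bool) (L : List (Fin q × Bool)) : Wd (x :: L) = x.1 :: Wd L := rfl

lemma Nneg_cons_true (i : Fin q) (L : List (Fin q × Bool)) :
    Nneg ((i, true) :: L) = Nneg L := by simp [Nneg, List.countP_cons]

lemma Nneg_cons_false (i : Fin q) (L : List (Fin q × Bool)) :
    Nneg ((i, false) :: L) = Nneg L + 1 := by simp [Nneg, List.countP_cons]

lemma sgn_congr {m n : ℕ} (h : m % 2 = n % 2) : ((-1:ℚ))^m = (-1)^n := by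
  rw [neg_one_pow_eq_pow_mod_two, h, ← neg_one_pow_eq_pow_mod_two]

lemma sgn_mul (m n : ℕ) (X : ℚ) : (-1:ℚ)^m * ((-1:ℚ)^n * X) = (-1:ℚ)^(m+n) * X := by
  rw [← mul_assoc, ← pow_add]

lemma nonneg_sgn_congr {m n : ℕ} (h : m % 2 = n % 2) {X : ℚ}
    (hX : 0 ≤ (-1:ℚ)^m * X) : 0 ≤ (-1:ℚ)^n * X := by
  rwa [sgn_congr h] at hX

lemma pos_sgn_congr {m n : ℕ} (h : m % 2 = n % 2) {X : ℚ}
    (hX : 0 < (-1:ℚ)^m * X) : 0 < (-1:ℚ)^n * X := by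
  rwa [sgn_congr h] at hX

lemma run_lemma : ∀ (m : ℕ) (L : List (Fin q × Bool)) (i : Fin q),
    Red ((i, false) :: L) → (Wd L).take m = List.replicate m i →
    L.take m = List.replicate m (i, false) := by
  intro m
  induction m with
  | zero => intro L i _ _; simp
  | succ n ihm =>
    intro L i hR htake
    cases L with
    | nil => exfalso; simpa [Wd] using congrArg List.length htake
    | cons y T =>
      simp only [Wd, List.map_cons, List.take_succ_cons, List.replicate_succ,
        List.cons.injEq] at htake
      have hrel := (List.isChain_cons_cons.mp hR).1
      have hy2 : y.2 = false := by
        cases hy : y.2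
        · rfl
        · exact absurd ⟨htake.1.symm, by simp [hy]⟩ hrel
      have hy : y = (i, false) := Prod.ext htake.1 hy2
      subst hy
      have hR' : Red ((i, false) :: T) := hR.tail
      rw [List.take_succ_cons, List.replicate_succ, ihm T i hR' htake.2]

lemma Bad_nil (v : List (Fin q)) : Bad ([] : List (Fin q × Bool)) v ↔ v ≠ [] := Iff.rfl

lemma gam_false (a : ℕ) : gam false a = (-1:ℚ)^a := by simp [gam]

lemma gam_true_one : gam true 1 = 1 := by simp [gam]

lemma gam_true_big {a : ℕ} (h : 2 ≤ a) : gam true a = 0 := by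
  simp [gam, show ¬(a ≤ 1) by omega]

theorem master : ∀ (L : List (Fin q × Bool)), Red L →
    (∀ v : List (Fin q), 0 ≤ (-1:ℚ)^(v.length + Nneg L) * val L (v ++ Wd L))
  ∧ (0 < (-1:ℚ)^(Nneg L) * val L (Wd L))
  ∧ (∀ b j, 1 ≤ b → L.take b = List.replicate b (j, false) →
      0 ≤ (-1:ℚ)^(Nneg L + b) * val L ((Wd L).drop b))
  ∧ (∀ v : List (Fin q), Bad L v → val L (v ++ Wd L) = 0) := by
  intro L
  induction L with
  | nil =>
    intro _
    refine ⟨?_, ?_, ?_, ?_⟩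
    · intro v
      by_cases hv : v = [] <;> simp [val_nil, Wd, Nneg, hv]
    · simp [val_nil, Wd, Nneg]
    · intro b j hb htake
      exfalso
      have := congrArg List.length htake
      simp at this
      omega
    · intro v hv
      have hne : v ≠ [] := hv
      simp [val_nil, Wd, hne]
  | cons x L ih =>
    intro hRed
    have hL : Red L := hRed.tail
    obtain ⟨A1, A2, B, C⟩ := ih hL
    obtain ⟨i, ε⟩ := x
    -- helper : value vanishing for a positive head with an extra head letter
    have hval0 : ε = true → ∀ w : List (Fin q), val L ((w ++ [i]) ++ Wd L) = 0 := by
      intro hε w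
      rcases L with _ | ⟨y, T⟩
      · simp [val_nil, Wd]
      · refine C _ (fun hgood => ?_)
        obtain ⟨hrep, hor⟩ := hgood
        have hne : w ++ [i] ≠ [] := by simp
        have hy2 : y.2 = false := hor.resolve_left hne
        have hiy : i = y.1 := by
          have hmem : i ∈ w ++ [i] := by simp
          rw [hrep] at hmem
          exact List.eq_of_mem_replicate hmem
        have hrel := (List.isChain_cons_cons.mp hRed).1
        exact hrel ⟨hiy, by simp [hε, hy2]⟩
    -- helper : the prefix is a replicate when the take-condition overruns it
    have vrep_of : ∀ (a : ℕ) (v w : List (Fin q)), v.length < a →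
        ((v ++ w).take a = List.replicate a i) → v = List.replicate v.length i := by
      intro a v w hlt hc
      have h1 : (v ++ w).take v.length = v := List.take_left
      have h2 : (v ++ w).take v.length = ((v ++ w).take a).take v.length := by
        rw [List.take_take, min_eq_left (by omega)]
      rw [h2, hc, List.take_replicate, min_eq_left (by omega)] at h1
      exact h1.symm
    -- the main term-by-term estimate
    have termA : ∀ (v : List (Fin q)) (a : ℕ),
        0 ≤ (-1:ℚ)^(v.length + Nneg ((i,ε)::L)) *
          (gam ε a * (if (v ++ (i :: Wd L)).take a = List.replicate a i
            then val L ((v ++ (i :: Wd L)).drop a) else 0)) := by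
      intro v a
      by_cases hc : (v ++ (i :: Wd L)).take a = List.replicate a i
      swap
      · simp [hc]
      rw [if_pos hc]
      rcases Nat.lt_or_ge a (v.length + 1) with hlt | hge
      · -- a ≤ v.length
        have ha : a ≤ v.length := by omega
        have hdrop : (v ++ (i :: Wd L)).drop a = (v.drop a ++ [i]) ++ Wd L := by
          rw [List.drop_append_of_le_length ha, List.append_assoc, List.singleton_append]
        rw [hdrop]
        cases ε with
        | true =>
          rcases a with _ | _ | a2
          · rw [List.drop_zero, hval0 rfl v, mul_zero, mul_zero]
          · rw [Nneg_cons_true, gam_true_one, one_mul]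
            refine nonneg_sgn_congr (m := (v.drop 1 ++ [i]).length + Nneg L) ?_
              (A1 (v.drop 1 ++ [i]))
            simp only [List.length_append, List.length_drop, List.length_singleton]
            omega
          · rw [gam_true_big (by omega), zero_mul, mul_zero]
        | false =>
          rw [Nneg_cons_false, gam_false, sgn_mul]
          refine nonneg_sgn_congr (m := (v.drop a ++ [i]).length + Nneg L) ?_
            (A1 (v.drop a ++ [i]))
          simp only [List.length_append, List.length_drop, List.length_singleton]
          omega
      · -- a ≥ v.length + 1
        have hvrep : v = List.replicate v.length i := vrep_of a v _ (by omega) hc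
        rcases Nat.lt_or_ge a (v.length + 2) with h1 | h2
        · have haeq : a = v.length + 1 := by omega
          have hdrop : (v ++ (i :: Wd L)).drop a = Wd L := by
            rw [haeq, show v ++ (i :: Wd L) = (v ++ [i]) ++ Wd L by simp,
                show v.length + 1 = (v ++ [i]).length by simp]
            exact List.drop_left
          rw [hdrop]
          cases ε with
          | true =>
            rcases v with _ | ⟨j, v'⟩
            · have ha1 : a = 1 := by simpa using haeq
              subst ha1
              rw [Nneg_cons_true, gam_true_one, one_mul]
              simpa using A2.le
            · have h2a : 2 ≤ a := by rw [haeq]; simp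
              rw [gam_true_big h2a, zero_mul, mul_zero]
          | false =>
            rw [Nneg_cons_false, gam_false, sgn_mul]
            exact nonneg_sgn_congr (m := Nneg L) (by omega) A2.le
        · -- a ≥ v.length + 2
          cases ε with
          | true =>
            rw [gam_true_big (by omega), zero_mul, mul_zero]
          | false =>
            set c := a - (v.length + 1) with hcdef
            have hc1 : 1 ≤ c := by omega
            have happ : v ++ (i :: Wd L) = (v ++ [i]) ++ Wd L := by simp
            have hlen1 : (v ++ [i]).length = v.length + 1 := by simp
            have hWtake : (Wd L).take c = List.replicate c i := by
              have h3 : ((v ++ (i :: Wd L)).take a).drop (v.length + 1)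
                  = List.replicate c i := by
                rw [hc, List.drop_replicate]
              rw [List.drop_take] at h3
              have h5 : (v ++ (i :: Wd L)).drop (v.length + 1) = Wd L := by
                rw [happ, ← hlen1]
                exact List.drop_left
              rw [h5] at h3
              exact h3
            have hLtake := run_lemma c L i hRed hWtake
            have hB := B c i hc1 hLtake
            have hdrop : (v ++ (i :: Wd L)).drop a = (Wd L).drop c := by
              rw [happ, show a = (v ++ [i]).length + c by rw [hlen1]; omega]
              exact List.drop_length_add_append _
            rw [hdrop, Nneg_cons_false, gam_false, sgn_mul]
            exact nonneg_sgn_congr (m := Nneg L + c) (by omega) hB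
    refine ⟨?_, ?_, ?_, ?_⟩
    · -- A1
      intro v
      rw [Wd_cons, val_cons, Finset.mul_sum]
      exact Finset.sum_nonneg fun a _ => termA v a
    · -- A2
      rw [Wd_cons, val_cons, Finset.mul_sum]
      apply Finset.sum_pos'
      · intro a _
        simpa using termA [] a
      · refine ⟨1, Finset.mem_range.mpr (by simp), ?_⟩
        have hcond : (i :: Wd L).take 1 = List.replicate 1 i := by simp
        rw [if_pos hcond, show (i :: Wd L).drop 1 = Wd L from rfl]
        cases ε with
        | true =>
          rw [Nneg_cons_true, gam_true_one, one_mul]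
          exact A2
        | false =>
          rw [Nneg_cons_false, gam_false, sgn_mul]
          exact pos_sgn_congr (m := Nneg L) (by omega) A2
    · -- B
      intro b j hb htake
      obtain ⟨m, rfl⟩ : ∃ m, b = m + 1 := ⟨b - 1, by omega⟩
      rw [List.take_succ_cons, List.replicate_succ, List.cons.injEq] at htake
      obtain ⟨hx, htL⟩ := htake
      injection hx with h1 h2
      subst h1
      subst h2
      rw [Wd_cons, Nneg_cons_false,
          show ((i :: Wd L)).drop (m+1) = (Wd L).drop m from rfl, val_cons, Finset.mul_sum]
      apply Finset.sum_nonneg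
      intro a _
      by_cases hc : ((Wd L).drop m).take a = List.replicate a i
      swap
      · simp [hc]
      rw [if_pos hc]
      have htWd : (Wd L).take m = List.replicate m i := by
        calc (Wd L).take m = List.map Prod.fst (L.take m) := List.map_take.symm
          _ = List.map Prod.fst (List.replicate m (i, false)) := by rw [htL]
          _ = List.replicate m i := by rw [List.map_replicate]
      have htall : (Wd L).take (m + a) = List.replicate (m + a) i := by
        rw [List.take_add, htWd, hc, ← List.replicate_add]
      have hLt := run_lemma (m + a) L i hRed htall
      have hdd : ((Wd L).drop m).drop a = (Wd L).drop (m + a) := List.drop_drop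
      rw [hdd, gam_false, sgn_mul]
      rcases Nat.eq_zero_or_pos (m + a) with h0 | hpos
      · obtain ⟨hm0, ha0⟩ : m = 0 ∧ a = 0 := by omega
        have hdeq : (Wd L).drop (m + a) = Wd L := by
          rw [show m + a = 0 by omega, List.drop_zero]
        rw [hdeq]
        exact nonneg_sgn_congr (m := Nneg L) (by omega) A2.le
      · exact nonneg_sgn_congr (m := Nneg L + (m + a)) (by omega) (B (m + a) i hpos hLt)
    · -- C
      intro v hBad
      rw [Wd_cons, val_cons]
      apply Finset.sum_eq_zero
      intro a _
      by_cases hc : (v ++ (i :: Wd L)).take a = List.replicate a i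
      swap
      · simp [hc]
      rw [if_pos hc]
      rcases Nat.lt_or_ge a (v.length + 1) with hlt | hge
      · have ha : a ≤ v.length := by omega
        have hdrop : (v ++ (i :: Wd L)).drop a = (v.drop a ++ [i]) ++ Wd L := by
          rw [List.drop_append_of_le_length ha, List.append_assoc, List.singleton_append]
        have htv : v.take a = List.replicate a i := by
          have h6 : (v ++ (i :: Wd L)).take a = v.take a := by
            rw [List.take_append, show a - v.length = 0 by omega]
            simp
          rw [← h6, hc]
        have hz : val L ((v.drop a ++ [i]) ++ Wd L) = 0 := by
          rcases L with _ | ⟨y, T⟩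
          · simp [val_nil, Wd]
          · refine C _ (fun hgood => ?_)
            obtain ⟨hrep, hor⟩ := hgood
            have hne : v.drop a ++ [i] ≠ [] := by simp
            have hy2 : y.2 = false := hor.resolve_left hne
            have hiy : i = y.1 := by
              have hmem : i ∈ v.drop a ++ [i] := by simp
              rw [hrep] at hmem
              exact List.eq_of_mem_replicate hmem
            have hεf : ε = false := by
              have hrel := (List.isChain_cons_cons.mp hRed).1
              cases hεc : ε
              · rfl
              · rw [hεc] at hrel
                exact absurd ⟨hiy, by simp [hy2]⟩ hrel
            have hall : ∀ e ∈ v.drop a, e = i := by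
              intro e he
              have hmem : e ∈ v.drop a ++ [i] := List.mem_append_left _ he
              rw [hrep] at hmem
              exact (List.eq_of_mem_replicate hmem).trans hiy.symm
            have hdv : v.drop a = List.replicate (v.drop a).length i :=
              List.eq_replicate_of_mem hall
            have hvrep : v = List.replicate v.length i := by
              conv_lhs => rw [← List.take_append_drop a v]
              rw [htv, hdv, ← List.replicate_add]
              congr 1
              have hld : (v.drop a).length = v.length - a := by simp
              omega
            exact hBad ⟨hvrep, Or.inr hεf⟩
        rw [hdrop, hz, mul_zero]
      · have hvrep : v = List.replicate v.length i := vrep_of a v _ (by omega) hc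
        have hcons : ¬(v = [] ∨ ε = false) := fun hor => hBad ⟨hvrep, hor⟩
        push_neg at hcons
        obtain ⟨hvne, hεne⟩ := hcons
        have hεt : ε = true := by
          cases hεc : ε
          · exact absurd hεc hεne
          · rfl
        have hlen : 1 ≤ v.length := List.length_pos_iff.mpr hvne
        rw [hεt, gam_true_big (by omega), zero_mul]

/-! ### Analytic identities for the factors -/

lemma factor_true (i : Fin q) : factor (i, true) = 1 + xi i := by
  apply PowerSeries.ext
  intro n
  rw [coeff_factor, map_add, PowerSeries.coeff_one]
  rcases n with _ | _ | n
  · simp [gam, xi]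
  · simp [gam, xi]
  · rw [gam_true_big (by omega)]
    simp [xi]

lemma coeff_xi_mul (i : Fin q) (f : MagnusRing q) (n : ℕ) :
    PowerSeries.coeff (R := FreeAlgebra ℚ (Fin q)) n (xi i * f)
      = if 1 ≤ n then (FreeAlgebra.ι ℚ i) *
          PowerSeries.coeff (R := FreeAlgebra ℚ (Fin q)) (n-1) f else 0 := by
  rw [PowerSeries.coeff_mul, Finset.Nat.sum_antidiagonal_eq_sum_range_succ_mk]
  rcases n with _ | n
  · simp [xi]
  · rw [if_pos (by omega)]
    rw [Finset.sum_eq_single 1]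
    · simp [xi]
    · intro b _ hbne
      simp [xi, hbne]
    · intro hnot
      exact absurd (Finset.mem_range.mpr (by omega)) hnot

lemma coeff_mul_xi (i : Fin q) (f : MagnusRing q) (n : ℕ) :
    PowerSeries.coeff (R := FreeAlgebra ℚ (Fin q)) n (f * xi i)
      = if 1 ≤ n then PowerSeries.coeff (R := FreeAlgebra ℚ (Fin q)) (n-1) f *
          (FreeAlgebra.ι ℚ i) else 0 := by
  rw [PowerSeries.coeff_mul, Finset.Nat.sum_antidiagonal_eq_sum_range_succ_mk]
  rcases n with _ | n
  · simp [xi]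
  · rw [if_pos (by omega)]
    rw [Finset.sum_eq_single n]
    · simp [xi]
    · intro b hb hbne
      have hble : b < n + 2 := Finset.mem_range.mp hb
      have : ¬(n + 1 - b = 1) := by omega
      simp [xi, this]
    · intro hnot
      exact absurd (Finset.mem_range.mpr (by omega)) hnot

lemma mul_factor_false (i : Fin q) : (1 + xi i) * factor (i, false) = 1 := by
  apply PowerSeries.ext
  intro n
  rw [add_mul, one_mul, map_add, coeff_factor, coeff_xi_mul, PowerSeries.coeff_one]
  rcases n with _ | n
  · simp [gam]
  · rw [if_pos (by omega), if_neg (by omega), coeff_factor, gam_false, gam_false]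
    have h1 : n + 1 - 1 = n := by omega
    rw [h1, mul_smul_comm, ← pow_succ', ← add_smul]
    rw [show ((-1:ℚ)^(n+1) + (-1:ℚ)^n) = 0 by rw [pow_succ]; ring, zero_smul]

lemma factor_false_mul (i : Fin q) : factor (i, false) * (1 + xi i) = 1 := by
  apply PowerSeries.ext
  intro n
  rw [mul_add, mul_one, map_add, coeff_factor, coeff_mul_xi, PowerSeries.coeff_one]
  rcases n with _ | n
  · simp [gam]
  · rw [if_pos (by omega), if_neg (by omega), coeff_factor, gam_false, gam_false]
    have h1 : n + 1 - 1 = n := by omega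
    rw [h1, smul_mul_assoc, ← pow_succ, ← add_smul]
    rw [show ((-1:ℚ)^(n+1) + (-1:ℚ)^n) = 0 by rw [pow_succ]; ring, zero_smul]

lemma coe_inv_unit (U : (MagnusRing q)ˣ) (i : Fin q)
    (hU : (U : MagnusRing q) = 1 + xi i) :
    ((U⁻¹ : (MagnusRing q)ˣ) : MagnusRing q) = factor (i, false) := by
  calc ((U⁻¹ : (MagnusRing q)ˣ) : MagnusRing q)
      = ((U⁻¹ : (MagnusRing q)ˣ) : MagnusRing q) * ((1 + xi i) * factor (i, false)) := by
        rw [mul_factor_false, mul_one]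
    _ = (((U⁻¹ : (MagnusRing q)ˣ) : MagnusRing q) * (U : MagnusRing q)) * factor (i, false) := by
        rw [hU, mul_assoc]
    _ = factor (i, false) := by rw [Units.inv_mul, one_mul]

/-! ### Reducedness of `toWord` -/

lemma red_of_reduce (L : List (Fin q × Bool)) (h : FreeGroup.reduce L = L) : Red L := by
  by_contra hnc
  rw [Red, List.Chain', List.isChain_iff_getElem] at hnc
  push_neg at hnc
  obtain ⟨n, hn, hP⟩ := hnc
  have h1n : n < L.length := by omega
  have h2n : n + 1 < L.length := by omega
  set p := L.get ⟨n, h1n⟩ with hpdef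
  set r := L.get ⟨n+1, h2n⟩ with hrdef
  have hsplit : L = L.take n ++ p :: r :: L.drop (n+2) := by
    conv_lhs => rw [← List.take_append_drop n L]
    rw [List.drop_eq_getElem_cons h1n, List.drop_eq_getElem_cons h2n]
    rfl
  have hp : p = (r.1, !r.2) := Prod.ext hP.1 hP.2
  have hr : r = (r.1, !(!r.2)) := Prod.ext rfl (Bool.not_not r.2).symm
  exact FreeGroup.reduce.not (h.trans (by rw [hsplit, ← hp, ← hr]))

end Magnus

/-- The elements `aᵢ = 1 + ξᵢ` generate a free subgroup of rank `q` of the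
group of units of `R`: any homomorphism from the free group of rank `q` to the
units of `R` sending the `i`-th generator to `1 + ξᵢ` is injective. -/
theorem magnus_embedding_injective {q : ℕ}
    (μ : FreeGroup (Fin q) →* (MagnusRing q)ˣ)
    (hμ : ∀ i : Fin q, (μ (FreeGroup.of i) : MagnusRing q) = 1 + xi i) :
    Function.Injective μ := by
  rw [injective_iff_map_eq_one]
  intro w hw
  by_contra hne
  have hRed : Magnus.Red w.toWord := Magnus.red_of_reduce _ (FreeGroup.reduce_toWord w)
  have hnil : w.toWord ≠ [] := fun h => hne (FreeGroup.toWord_eq_nil_iff.mp h)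
  have hcoe : ((μ w : (MagnusRing q)ˣ) : MagnusRing q)
      = ((w.toWord.map Magnus.factor).prod) := by
    have hμeq : μ = FreeGroup.lift (fun i => μ (FreeGroup.of i)) := by
      apply FreeGroup.ext_hom
      intro a
      rw [FreeGroup.lift_apply_of]
    conv_lhs => rw [hμeq, ← FreeGroup.mk_toWord (x := w)]
    rw [FreeGroup.lift_mk]
    rw [show ((List.map (fun x => bif x.2 then μ (FreeGroup.of x.1)
          else (μ (FreeGroup.of x.1))⁻¹) w.toWord).prod : MagnusRing q)
        = (Units.coeHom (MagnusRing q))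
            (List.map (fun x => bif x.2 then μ (FreeGroup.of x.1)
              else (μ (FreeGroup.of x.1))⁻¹) w.toWord).prod from rfl]
    rw [map_list_prod, List.map_map]
    congr 1
    apply List.map_congr_left
    intro x _
    rcases x with ⟨j, b⟩
    cases b
    · show ((μ (FreeGroup.of j))⁻¹ : (MagnusRing q)ˣ).val = Magnus.factor (j, false)
      exact Magnus.coe_inv_unit _ j (hμ j)
    · show ((μ (FreeGroup.of j)) : MagnusRing q) = Magnus.factor (j, true)
      rw [Magnus.factor_true, hμ j]
  have h1 : Magnus.psi (Magnus.Wd w.toWord) ((μ w : (MagnusRing q)ˣ) : MagnusRing q)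
      = Magnus.val w.toWord (Magnus.Wd w.toWord) := by
    rw [hcoe, Magnus.psi_prod]
  rw [hw, Units.val_one, Magnus.psi_one,
      if_neg (by simp [Magnus.Wd, hnil])] at h1
  have h2 := (Magnus.master w.toWord hRed).2.1
  rw [← h1] at h2
  simp at h2
end

section
/- (Magnus) If F is a free group and f ∈ γₙ(F) is written as f = 1 + φ under the Magnus embedding F → R sending the i-th free generator to 1+ξᵢ, then all homogeneous components of φ of degree less than n vanish. -/
/-!
The units `u` of `R⟦X⟧` with `u ≡ 1 mod X ^ n` form subgroups `U n`, and since the order of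
power series is superadditive, `⁅U s, U t⁆ ≤ U (s + t)`, because
`⁅u, v⁆ - 1 = ((u - 1) (v - 1) - (v - 1) (u - 1)) u⁻¹ v⁻¹`. Every element of a
free group is sent by the Magnus map into `U 1`, so `n ↦ μ⁻¹ (U (n + 1))` is a descending central
series and hence contains the lower central series term by term.
-/

open scoped commutatorElement

namespace PowerSeries

variable {R : Type*} [Ring R]

theorem le_order_mul_of_le {φ ψ : R⟦X⟧} {s t : ℕ∞} (hφ : s ≤ order φ) (hψ : t ≤ order ψ) :
    s + t ≤ order (φ * ψ) :=
  (add_le_add hφ hψ).trans (le_order_mul φ ψ)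

theorem le_order_mul_of_le_left {φ : R⟦X⟧} (ψ : R⟦X⟧) {s : ℕ∞} (hφ : s ≤ order φ) :
    s ≤ order (φ * ψ) := by
  simpa using le_order_mul_of_le hφ (bot_le (a := order ψ))

theorem le_order_mul_of_le_right (φ : R⟦X⟧) {ψ : R⟦X⟧} {t : ℕ∞} (hψ : t ≤ order ψ) :
    t ≤ order (φ * ψ) := by
  simpa using le_order_mul_of_le (bot_le (a := order φ)) hψ

theorem le_order_add {φ ψ : R⟦X⟧} {n : ℕ∞} (hφ : n ≤ order φ) (hψ : n ≤ order ψ) :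
    n ≤ order (φ + ψ) :=
  (le_min hφ hψ).trans (min_order_le_order_add φ ψ)

theorem le_order_sub {φ ψ : R⟦X⟧} {n : ℕ∞} (hφ : n ≤ order φ) (hψ : n ≤ order ψ) :
    n ≤ order (φ - ψ) := by
  rw [sub_eq_add_neg]
  exact le_order_add hφ (by rwa [order_neg])

variable (R) in
/-- The higher unit group `U n = 1 + X ^ n R⟦X⟧`. -/
def higherUnitGroup (n : ℕ) : Subgroup R⟦X⟧ˣ where
  carrier := {u | (n : ℕ∞) ≤ order ((u : R⟦X⟧) - 1)}
  one_mem' := by simp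
  mul_mem' {u v} hu hv := by
    have h : ((u * v : R⟦X⟧ˣ) : R⟦X⟧) - 1 = ((u : R⟦X⟧) - 1) + u * ((v : R⟦X⟧) - 1) := by
      rw [Units.val_mul]; noncomm_ring
    rw [Set.mem_ofPred_eq, h]
    exact le_order_add hu (le_order_mul_of_le_right _ hv)
  inv_mem' {u} hu := by
    have h : ((u⁻¹ : R⟦X⟧ˣ) : R⟦X⟧) - 1 = -((u⁻¹ : R⟦X⟧ˣ) * ((u : R⟦X⟧) - 1)) := by
      rw [mul_sub, Units.inv_mul, mul_one, neg_sub]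
    rw [Set.mem_ofPred_eq, h, order_neg]
    exact le_order_mul_of_le_right _ hu

theorem mem_higherUnitGroup {n : ℕ} {u : R⟦X⟧ˣ} :
    u ∈ higherUnitGroup R n ↔ (n : ℕ∞) ≤ order ((u : R⟦X⟧) - 1) :=
  Iff.rfl

theorem commutatorElement_mem_higherUnitGroup {s t : ℕ} {u v : R⟦X⟧ˣ}
    (hu : u ∈ higherUnitGroup R s) (hv : v ∈ higherUnitGroup R t) :
    ⁅u, v⁆ ∈ higherUnitGroup R (s + t) := by
  have h : ((⁅u, v⁆ : R⟦X⟧ˣ) : R⟦X⟧) - 1 =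
      (((u : R⟦X⟧) - 1) * ((v : R⟦X⟧) - 1) - ((v : R⟦X⟧) - 1) * ((u : R⟦X⟧) - 1)) *
        (u⁻¹ * v⁻¹ : R⟦X⟧ˣ) := by
    rw [← show (u : R⟦X⟧) * v - v * u = ((u - 1) * (v - 1) - (v - 1) * (u - 1) : R⟦X⟧) by
      noncomm_ring]
    simp only [commutatorElement_def, Units.val_mul, sub_mul, mul_assoc,
      Units.mul_inv_cancel_left, Units.mul_inv]
  rw [mem_higherUnitGroup, h, Nat.cast_add]
  refine le_order_mul_of_le_left _ (le_order_sub (le_order_mul_of_le hu hv) ?_)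
  rw [add_comm]
  exact le_order_mul_of_le hv hu

theorem lowerCentralSeries_le_comap_higherUnitGroup {G : Type*} [Group G] (μ : G →* R⟦X⟧ˣ)
    (hμ : ∀ g, μ g ∈ higherUnitGroup R 1) (n : ℕ) :
    Subgroup.lowerCentralSeries (⊤ : Subgroup G) n ≤ (higherUnitGroup R (n + 1)).comap μ :=
  Subgroup.descending_central_series_ge_lower (fun n => (higherUnitGroup R (n + 1)).comap μ)
    ⟨top_unique fun g _ => hμ g, fun _ _ hx g => by
      simpa only [Subgroup.mem_comap, map_commutatorElement] using
        commutatorElement_mem_higherUnitGroup hx (hμ g)⟩ n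

end PowerSeries

theorem one_le_order_xi {q : ℕ} (i : Fin q) : 1 ≤ PowerSeries.order (xi i) :=
  PowerSeries.nat_le_order _ 1 fun j hj => by simp [xi, Nat.lt_one_iff.mp hj]

/-- (Magnus) If `f` lies in the `n`-th term of the lower central series of the
free group `F` (here `lowerCentralSeries F m` is `γ_{m+1}(F)` of the paper, so
`f ∈ γ_{m+1}(F)`) and `μ f = 1 + φ` under the Magnus embedding `xᵢ ↦ 1 + ξᵢ`,
then every homogeneous component of `φ` of degree `< m + 1` vanishes. -/
theorem magnus_lowerCentralSeries_homogeneous_components_vanish {q : ℕ}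
    (μ : FreeGroup (Fin q) →* (MagnusRing q)ˣ)
    (hμ : ∀ i : Fin q, (μ (FreeGroup.of i) : MagnusRing q) = 1 + xi i)
    (m : ℕ) (f : FreeGroup (Fin q)) (hf : f ∈ Subgroup.lowerCentralSeries (⊤ : Subgroup (FreeGroup (Fin q))) m)
    (k : ℕ) (hk : k < m + 1) :
    PowerSeries.coeff (R := FreeAlgebra ℚ (Fin q)) k ((μ f : MagnusRing q) - 1) = 0 := by
  have hgen : (PowerSeries.higherUnitGroup _ 1).comap μ = ⊤ := by
    rw [eq_top_iff, ← FreeGroup.closure_range_of, Subgroup.closure_le]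
    rintro _ ⟨i, rfl⟩
    simpa [PowerSeries.mem_higherUnitGroup, hμ] using one_le_order_xi i
  have hf' := PowerSeries.lowerCentralSeries_le_comap_higherUnitGroup μ
    (fun g => hgen.ge (Subgroup.mem_top g)) m hf
  exact PowerSeries.coeff_of_lt_order k ((Nat.cast_lt.mpr hk).trans_le hf')
end

section
/- Every free group F satisfies ⋂ₙ γₙ(F) = 1, i.e., the intersection of the lower central series of a free group is trivial. -/
/-!
Write `g ≠ 1` as `x₁ ^ m₁ ⋯ x_r ^ m_r` with `xₜ ≠ xₜ₊₁` and `mₜ ≠ 0`. For the word `w = x₁ ⋯ x_r`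
let `N_x = ∑_{wₜ = x} E_{t-1,t}`, an `(r+1) × (r+1)` integer matrix; `N_x ^ 2 = 0` since consecutive
letters of `w` differ, so `x ↦ 1 + N_x` defines a representation of the free group with
`x ^ m ↦ 1 + m N_x`. The `(0, r)` entry of the image of `g` is `m₁ ⋯ m_r ≠ 0`, because a product of
`r` upper bidiagonal matrices reaches column `r` from row `0` only by using the superdiagonal entry
of every factor. On the other hand, commutators add the filtration degree of "vanishing below the
`k`-th superdiagonal", so the image of `γ_{r+1}` is congruent to `1` modulo matrices vanishing
below the `(r+1)`-st superdiagonal, whose `(0, r)` entry is `0`.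
-/

open scoped commutatorElement

section FiltrationUnits

variable {R : Type*} [Ring R] {F : ℕ → AddSubgroup R} [SetLike.GradedMonoid F]

theorem mem_graded_zero_of_sub_one_mem (hF : Antitone F) {x : R} {k : ℕ} (hx : x - 1 ∈ F k) :
    x ∈ F 0 := by
  simpa using add_mem (SetLike.one_mem_graded F) (hF (Nat.zero_le k) hx)

theorem mul_sub_one_mem (hF : Antitone F) {x y : R} {k : ℕ} (hx : x - 1 ∈ F k)
    (hy : y - 1 ∈ F k) : x * y - 1 ∈ F k := by
  have hxy : (x - 1) * (y - 1) ∈ F k := hF (Nat.le_add_right k k) (SetLike.mul_mem_graded hx hy)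
  simpa [mul_sub, sub_mul, add_sub_assoc] using add_mem (add_mem hxy hx) hy

variable (F) in
/-- The condition on `u⁻¹` is needed because `F 0` need not be all of `R`. -/
def filtrationUnits (hF : Antitone F) (k : ℕ) : Subgroup Rˣ where
  carrier := {u | (u : R) - 1 ∈ F k ∧ ((u⁻¹ : Rˣ) : R) - 1 ∈ F k}
  one_mem' := by simp
  mul_mem' := fun ⟨hu, hu'⟩ ⟨hv, hv'⟩ =>
    ⟨mul_sub_one_mem hF hu hv, by simpa using mul_sub_one_mem hF hv' hu'⟩
  inv_mem' := fun ⟨hu, hu'⟩ => ⟨hu', by simpa using hu⟩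

theorem val_commutatorElement_sub_one_mem {u v : Rˣ} {m n : ℕ} (hu : (u : R) - 1 ∈ F m)
    (hv : (v : R) - 1 ∈ F n) (hu' : ((u⁻¹ : Rˣ) : R) ∈ F 0) (hv' : ((v⁻¹ : Rˣ) : R) ∈ F 0) :
    ((⁅u, v⁆ : Rˣ) : R) - 1 ∈ F (m + n) := by
  set u' : R := ((u⁻¹ : Rˣ) : R)
  set v' : R := ((v⁻¹ : Rˣ) : R)
  have key : ((⁅u, v⁆ : Rˣ) : R) - 1 = ((u - 1) * (v - 1) - (v - 1) * (u - 1)) * (u' * v') := by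
    have h : (v : R) * u * u' * v' = 1 := by simp [u', v', mul_assoc]
    calc ((⁅u, v⁆ : Rˣ) : R) - 1 = u * v * u' * v' - v * u * u' * v' := by
          rw [h, commutatorElement_def]; simp only [Units.val_mul, u', v']
      _ = _ := by noncomm_ring
  have hvu : ((v : R) - 1) * (u - 1) ∈ F (m + n) := add_comm n m ▸ SetLike.mul_mem_graded hv hu
  rw [key, ← add_zero (m + n), ← add_zero 0]
  exact SetLike.mul_mem_graded (sub_mem (SetLike.mul_mem_graded hu hv) hvu)
    (SetLike.mul_mem_graded hu' hv')

theorem commutatorElement_mem_filtrationUnits (hF : Antitone F) {u v : Rˣ} {m n : ℕ}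
    (hu : u ∈ filtrationUnits F hF m) (hv : v ∈ filtrationUnits F hF n) :
    ⁅u, v⁆ ∈ filtrationUnits F hF (m + n) := by
  have hu' := mem_graded_zero_of_sub_one_mem hF hu.2
  have hv' := mem_graded_zero_of_sub_one_mem hF hv.2
  refine ⟨val_commutatorElement_sub_one_mem hu.1 hv.1 hu' hv', ?_⟩
  rw [commutatorElement_inv, add_comm]
  exact val_commutatorElement_sub_one_mem hv.1 hu.1 hv' hu'

theorem lowerCentralSeries_le_comap_filtrationUnits {G : Type*} [Group G] (hF : Antitone F)
    (φ : G →* Rˣ) (hφ : φ.range ≤ filtrationUnits F hF 1) (k : ℕ) :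
    (⊤ : Subgroup G).lowerCentralSeries k ≤ (filtrationUnits F hF (k + 1)).comap φ := by
  induction k with
  | zero => exact fun g _ => hφ ⟨g, rfl⟩
  | succ k ih =>
    rw [Subgroup.lowerCentralSeries_succ, Subgroup.commutator_le]
    intro g hg h _
    rw [Subgroup.mem_comap, map_commutatorElement]
    exact commutatorElement_mem_filtrationUnits hF (ih hg) (hφ ⟨h, rfl⟩)

end FiltrationUnits

namespace Matrix

variable {R : Type*} {n : ℕ}

def vanishingBelow [Ring R] (k : ℕ) : AddSubgroup (Matrix (Fin n) (Fin n) R) where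
  carrier := {M | ∀ i j : Fin n, (j : ℕ) < i + k → M i j = 0}
  add_mem' hM hN i j h := by simp [hM i j h, hN i j h]
  zero_mem' _ _ _ := rfl
  neg_mem' hM i j h := by simp [hM i j h]

def vanishingAbove [Semiring R] (k : ℕ) : AddSubmonoid (Matrix (Fin n) (Fin n) R) where
  carrier := {M | ∀ i j : Fin n, (i : ℕ) + k < j → M i j = 0}
  add_mem' hM hN i j h := by simp [hM i j h, hN i j h]
  zero_mem' _ _ _ := rfl

theorem antitone_vanishingBelow [Ring R] : Antitone (vanishingBelow (R := R) (n := n)) :=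
  fun _ _ hkl _ hM i j h => hM i j (by omega)

instance [Ring R] : SetLike.GradedMonoid (vanishingBelow (R := R) (n := n)) where
  one_mem i j h := one_apply_ne (Fin.ne_of_val_ne (by omega))
  mul_mem k l M N hM hN i j h := by
    rw [mul_apply]
    refine Finset.sum_eq_zero fun m _ => ?_
    by_cases hm : (m : ℕ) < i + k
    · rw [hM i m hm, zero_mul]
    · rw [hN m j (by omega), mul_zero]

instance [Semiring R] : SetLike.GradedMonoid (vanishingAbove (R := R) (n := n)) where
  one_mem i j h := one_apply_ne (Fin.ne_of_val_ne (by omega))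
  mul_mem k l M N hM hN i j h := by
    rw [mul_apply]
    refine Finset.sum_eq_zero fun m _ => ?_
    by_cases hm : (i : ℕ) + k < m
    · rw [hM i m hm, zero_mul]
    · rw [hN m j (by omega), mul_zero]

end Matrix

def Units.oneAddOfMulSelfEqZero {R : Type*} [Ring R] {N : R} (hN : N * N = 0) : Rˣ where
  val := 1 + N
  inv := 1 - N
  val_inv := by simp [add_mul, mul_sub, hN]
  inv_val := by simp [sub_mul, mul_add, hN]

theorem Units.val_oneAddOfMulSelfEqZero_zpow {R : Type*} [Ring R] {N : R} (hN : N * N = 0)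
    (m : ℤ) : ((oneAddOfMulSelfEqZero hN ^ m : Rˣ) : R) = 1 + m • N := by
  induction m using Int.induction_on with
  | zero => simp
  | succ m ih =>
    rw [zpow_add_one, Units.val_mul, ih]
    simp [oneAddOfMulSelfEqZero, mul_add, add_mul, mul_assoc, hN, add_smul, add_assoc]
  | pred m ih =>
    rw [zpow_sub_one, Units.val_mul, ih]
    simp [oneAddOfMulSelfEqZero, mul_sub, add_mul, mul_assoc, hN, sub_smul, add_sub_assoc]

namespace FreeGroup

variable {α : Type*}

def syllableProd (S : List (α × ℤ)) : FreeGroup α := (S.map fun p => of p.1 ^ p.2).prod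

def IsReducedSyllables (S : List (α × ℤ)) : Prop :=
  (S.map Prod.fst).IsChain (· ≠ ·) ∧ ∀ p ∈ S, p.2 ≠ 0

theorem exists_isReducedSyllables_zpow_mul {S : List (α × ℤ)} (hS : IsReducedSyllables S)
    (x : α) (e : ℤ) :
    ∃ S', IsReducedSyllables S' ∧ syllableProd S' = of x ^ e * syllableProd S := by
  by_cases he : e = 0
  · exact ⟨S, hS, by simp [he]⟩
  rcases S with _ | ⟨⟨y, m⟩, T⟩
  · exact ⟨[(x, e)], ⟨List.isChain_singleton x, by simpa using he⟩, by simp [syllableProd]⟩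
  have hT : IsReducedSyllables T := ⟨hS.1.tail, fun p hp => hS.2 p (List.mem_cons_of_mem _ hp)⟩
  by_cases hxy : x = y
  · subst hxy
    have hprod : of x ^ e * syllableProd ((x, m) :: T) = of x ^ (e + m) * syllableProd T := by
      simp [syllableProd, zpow_add, mul_assoc]
    by_cases hem : e + m = 0
    · exact ⟨T, hT, by rw [hprod, hem, zpow_zero, one_mul]⟩
    · exact ⟨(x, e + m) :: T, ⟨hS.1, by simpa [hem] using hT.2⟩, hprod.symm⟩
  · refine ⟨(x, e) :: (y, m) :: T, ⟨List.isChain_cons_cons.2 ⟨hxy, hS.1⟩, ?_⟩, rfl⟩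
    simpa [he] using hS.2

theorem exists_isReducedSyllables (g : FreeGroup α) :
    ∃ S, IsReducedSyllables S ∧ syllableProd S = g := by
  have hg : g ∈ Subgroup.closure (Set.range of) := closure_range_of α ▸ Subgroup.mem_top g
  induction hg using Subgroup.closure_induction_left with
  | one => exact ⟨[], ⟨List.isChain_nil, by simp⟩, rfl⟩
  | mul_left _ hx _ _ ih =>
    obtain ⟨x, rfl⟩ := hx
    obtain ⟨S, hS, rfl⟩ := ih
    simpa using exists_isReducedSyllables_zpow_mul hS x 1
  | inv_mul_cancel _ hx _ _ ih =>
    obtain ⟨x, rfl⟩ := hx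
    obtain ⟨S, hS, rfl⟩ := ih
    simpa using exists_isReducedSyllables_zpow_mul hS x (-1)

section LetterShift

variable [DecidableEq α]

def letterShift (w : List α) (x : α) : Matrix (Fin (w.length + 1)) (Fin (w.length + 1)) ℤ :=
  Matrix.of fun i j => if (j : ℕ) = i + 1 ∧ w[(i : ℕ)]? = some x then 1 else 0

theorem letterShift_mem_vanishingBelow (w : List α) (x : α) :
    letterShift w x ∈ Matrix.vanishingBelow 1 := by
  intro i j h
  simp only [letterShift, Matrix.of_apply, ite_eq_right_iff, and_imp]
  omega

theorem one_add_smul_letterShift_mem_vanishingAbove (w : List α) (m : ℤ) (x : α) :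
    1 + m • letterShift w x ∈ Matrix.vanishingAbove 1 := by
  intro i j h
  simp [letterShift, Matrix.one_apply_ne (Fin.ne_of_val_ne (by omega : (i : ℕ) ≠ j)),
    show (j : ℕ) ≠ i + 1 by omega]

theorem letterShift_mul_self {w : List α} (hw : w.IsChain (· ≠ ·)) (x : α) :
    letterShift w x * letterShift w x = 0 := by
  ext i j
  rw [Matrix.mul_apply]
  refine Finset.sum_eq_zero fun l _ => ?_
  simp only [letterShift, Matrix.of_apply, mul_ite, mul_one, mul_zero, ite_eq_right_iff,
    one_ne_zero, imp_false, not_and]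
  rintro ⟨-, hlx⟩ hli hix
  rw [hli, List.getElem?_eq_some_iff] at hlx
  obtain ⟨hl, rfl⟩ := hlx
  obtain ⟨hi, hix⟩ := List.getElem?_eq_some_iff.1 hix
  exact List.isChain_iff_getElem.1 hw i hl hix

def letterShiftRep (w : List α) (hw : w.IsChain (· ≠ ·)) :
    FreeGroup α →* (Matrix (Fin (w.length + 1)) (Fin (w.length + 1)) ℤ)ˣ :=
  lift fun x => Units.oneAddOfMulSelfEqZero (letterShift_mul_self hw x)

theorem range_letterShiftRep_le (w : List α) (hw : w.IsChain (· ≠ ·)) :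
    (letterShiftRep w hw).range ≤ filtrationUnits _ Matrix.antitone_vanishingBelow 1 := by
  refine range_lift_le ?_
  rintro _ ⟨x, rfl⟩
  have h := letterShift_mem_vanishingBelow w x
  exact ⟨by simpa [Units.oneAddOfMulSelfEqZero] using h,
    by simpa [Units.oneAddOfMulSelfEqZero] using neg_mem h⟩

theorem val_letterShiftRep_syllableProd (w : List α) (hw : w.IsChain (· ≠ ·)) (S : List (α × ℤ)) :
    (letterShiftRep w hw (syllableProd S) : Matrix _ _ ℤ) =
      (S.map fun p => 1 + p.2 • letterShift w p.1).prod := by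
  induction S with
  | nil => simp [syllableProd]
  | cons p S ih =>
    rw [List.map_cons, List.prod_cons, ← ih]
    simp [syllableProd, letterShiftRep, Units.val_oneAddOfMulSelfEqZero_zpow]

theorem prod_one_add_smul_letterShift_apply (w u : List α) (T : List (α × ℤ))
    (hw : w = u ++ T.map Prod.fst) (i j : Fin (w.length + 1)) (hi : (i : ℕ) = u.length)
    (hj : (j : ℕ) = u.length + T.length) :
    (T.map fun p => 1 + p.2 • letterShift w p.1).prod i j = (T.map Prod.snd).prod := by
  induction T generalizing u i with
  | nil => simp [show i = j from Fin.ext (by simpa [hi] using hj.symm)]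
  | cons p T ih =>
    have hlen : u.length + 1 < w.length + 1 := by simp [hw]
    rw [List.map_cons, List.prod_cons, Matrix.mul_apply,
      Finset.sum_eq_single ⟨u.length + 1, hlen⟩]
    · have hwu : w[u.length]? = some p.1 := by simp [hw]
      have hA : (1 + p.2 • letterShift w p.1) i ⟨u.length + 1, hlen⟩ = p.2 := by
        simp [letterShift, hi, hwu, Matrix.one_apply_ne, Fin.ext_iff]
      rw [hA, ih (u ++ [p.1]) (by simp [hw]) _ (by simp), List.map_cons, List.prod_cons]
      simpa [add_assoc, add_comm 1] using hj
    · intro l _ hl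
      by_cases hlu : (l : ℕ) ≤ u.length
      · have hQ := SetLike.list_prod_map_mem_graded T (fun _ => 1) _
          fun q _ => one_add_smul_letterShift_mem_vanishingAbove w q.2 q.1
        rw [hQ l j (by simp at hj ⊢; omega), mul_zero]
      · rw [one_add_smul_letterShift_mem_vanishingAbove w p.2 p.1 i l
          (by rw [Ne, Fin.ext_iff] at hl; simp at hl; omega), zero_mul]
    · simp

end LetterShift

theorem eq_nil_of_syllableProd_mem_lowerCentralSeries {S : List (α × ℤ)}
    (hS : IsReducedSyllables S)
    (hmem : syllableProd S ∈ (⊤ : Subgroup (FreeGroup α)).lowerCentralSeries S.length) :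
    S = [] := by
  classical
  set w := S.map Prod.fst
  have hD := (lowerCentralSeries_le_comap_filtrationUnits _ (letterShiftRep w hS.1)
    (range_letterShiftRep_le w hS.1) _ hmem).1 0 (Fin.last _) (by simp [w])
  rw [Matrix.sub_apply, val_letterShiftRep_syllableProd,
    prod_one_add_smul_letterShift_apply w [] S (by simp [w]) 0 (Fin.last _) rfl (by simp [w])] at hD
  by_contra hne
  rw [Matrix.one_apply_ne (by simpa [Fin.ext_iff, w, eq_comm] using hne), sub_zero] at hD
  exact List.prod_ne_zero (by simpa using fun x h => hS.2 (x, 0) h rfl) hD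

end FreeGroup

/-- The intersection of the lower central series of a free group is trivial. -/
theorem freeGroup_iInf_lowerCentralSeries_eq_bot (α : Type*) :
    ⨅ n : ℕ, Subgroup.lowerCentralSeries (⊤ : Subgroup (FreeGroup α)) n = ⊥ := by
  refine eq_bot_iff.2 fun g hg => ?_
  obtain ⟨S, hS, rfl⟩ := FreeGroup.exists_isReducedSyllables g
  rw [FreeGroup.eq_nil_of_syllableProd_mem_lowerCentralSeries hS (Subgroup.mem_iInf.1 hg _)]
  exact one_mem _
end

section
/- (P. Hall) Let G be a group with a normal nilpotent subgroup N. If G/γ₂(N) is nilpotent, then G is nilpotent. -/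
set_option linter.unusedSectionVars false

namespace HallAux

variable {G : Type*} [Group G]

open Subgroup

/-- Three subgroups lemma, inclusion form, for normal subgroups. -/
theorem tsl (A B C : Subgroup G) [A.Normal] [B.Normal] [C.Normal] :
    ⁅⁅A, B⁆, C⁆ ≤ ⁅⁅B, C⁆, A⁆ ⊔ ⁅⁅C, A⁆, B⁆ := by
  set K : Subgroup G := ⁅⁅B, C⁆, A⁆ ⊔ ⁅⁅C, A⁆, B⁆ with hK
  haveI : K.Normal := Subgroup.sup_normal _ _
  set f := QuotientGroup.mk' K with hf
  have h1 : ⁅⁅B.map f, C.map f⁆, A.map f⁆ = ⊥ := by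
    rw [← Subgroup.map_commutator, ← Subgroup.map_commutator, Subgroup.map_eq_bot_iff,
      QuotientGroup.ker_mk']
    exact le_sup_left
  have h2 : ⁅⁅C.map f, A.map f⁆, B.map f⁆ = ⊥ := by
    rw [← Subgroup.map_commutator, ← Subgroup.map_commutator, Subgroup.map_eq_bot_iff,
      QuotientGroup.ker_mk']
    exact le_sup_right
  have h3 := Subgroup.commutator_commutator_eq_bot_of_rotate h1 h2
  rw [← Subgroup.map_commutator, ← Subgroup.map_commutator, Subgroup.map_eq_bot_iff,
    QuotientGroup.ker_mk'] at h3
  exact h3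

/-- Commutator distributes (as inequality) over sup on the left, for normal subgroups. -/
theorem commutator_sup_left (A B L : Subgroup G) [A.Normal] [B.Normal] [L.Normal] :
    ⁅A ⊔ B, L⁆ ≤ ⁅A, L⁆ ⊔ ⁅B, L⁆ := by
  set K : Subgroup G := ⁅A, L⁆ ⊔ ⁅B, L⁆ with hK
  haveI : K.Normal := Subgroup.sup_normal _ _
  set f := QuotientGroup.mk' K with hf
  have h1 : ⁅A.map f, L.map f⁆ = ⊥ := by
    rw [← Subgroup.map_commutator, Subgroup.map_eq_bot_iff, QuotientGroup.ker_mk']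
    exact le_sup_left
  have h2 : ⁅B.map f, L.map f⁆ = ⊥ := by
    rw [← Subgroup.map_commutator, Subgroup.map_eq_bot_iff, QuotientGroup.ker_mk']
    exact le_sup_right
  rw [Subgroup.commutator_eq_bot_iff_le_centralizer] at h1 h2
  have h3 : ⁅(A ⊔ B).map f, L.map f⁆ = ⊥ := by
    rw [Subgroup.commutator_eq_bot_iff_le_centralizer, Subgroup.map_sup]
    exact sup_le h1 h2
  rw [← Subgroup.map_commutator, Subgroup.map_eq_bot_iff, QuotientGroup.ker_mk'] at h3
  exact h3

/-- `push X k = ⁅⁅⁅X,⊤⁆,⊤⁆,…⁆` (k brackets). -/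
def push (X : Subgroup G) : ℕ → Subgroup G
  | 0 => X
  | k + 1 => ⁅push X k, ⊤⁆

instance push_normal (X : Subgroup G) [X.Normal] (k : ℕ) : (push X k).Normal := by
  induction k with
  | zero => assumption
  | succ k ih => exact @Subgroup.commutator_normal _ _ _ _ ih _

theorem push_mono {X Y : Subgroup G} (h : X ≤ Y) (k : ℕ) : push X k ≤ push Y k := by
  induction k with
  | zero => exact h
  | succ k ih => exact Subgroup.commutator_mono ih le_rfl

theorem push_add (X : Subgroup G) (a b : ℕ) : push X (a + b) = push (push X a) b := by
  induction b with
  | zero => rfl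
  | succ b ih => rw [← Nat.add_assoc, push, push, ih]

theorem push_le_self (X : Subgroup G) [X.Normal] (k : ℕ) : push X k ≤ X := by
  induction k with
  | zero => exact le_rfl
  | succ k ih =>
      exact le_trans (@Subgroup.commutator_le_left _ _ _ _ (push_normal X k)) ih

theorem push_succ_left (X : Subgroup G) (k : ℕ) :
    push X (k + 1) = push ⁅X, (⊤ : Subgroup G)⁆ k := by
  induction k with
  | zero => rfl
  | succ k ih =>
      show ⁅push X (k + 1), ⊤⁆ = ⁅push ⁅X, (⊤ : Subgroup G)⁆ k, ⊤⁆
      rw [ih]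

theorem push_sup_le (A B : Subgroup G) [A.Normal] [B.Normal] (k : ℕ) :
    push (A ⊔ B) k ≤ push A k ⊔ push B k := by
  induction k with
  | zero => exact le_rfl
  | succ k ih =>
      calc push (A ⊔ B) (k + 1) = ⁅push (A ⊔ B) k, ⊤⁆ := rfl
        _ ≤ ⁅push A k ⊔ push B k, ⊤⁆ := Subgroup.commutator_mono ih le_rfl
        _ ≤ ⁅push A k, ⊤⁆ ⊔ ⁅push B k, ⊤⁆ := commutator_sup_left _ _ _

theorem push_le_lcs (X : Subgroup G) (k : ℕ) : push X k ≤ Subgroup.lowerCentralSeries (⊤ : Subgroup G) k := by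
  induction k with
  | zero => exact le_top
  | succ k ih => exact Subgroup.commutator_mono ih le_rfl

theorem lcs_add_eq (d m : ℕ) :
    Subgroup.lowerCentralSeries (⊤ : Subgroup G) (d + m) = push (Subgroup.lowerCentralSeries (⊤ : Subgroup G) d) m := by
  induction m with
  | zero => rfl
  | succ m ih =>
      show ⁅Subgroup.lowerCentralSeries (⊤ : Subgroup G) (d + m), ⊤⁆ = ⁅push (Subgroup.lowerCentralSeries (⊤ : Subgroup G) d) m, ⊤⁆
      rw [ih]

/-- Distribution of pushes over a commutator. -/
theorem push_commutator_le (k : ℕ) :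
    ∀ (X Y : Subgroup G), X.Normal → Y.Normal → ∀ T : Subgroup G,
      (∀ a b, a + b = k → ⁅push X a, push Y b⁆ ≤ T) → push ⁅X, Y⁆ k ≤ T := by
  induction k with
  | zero =>
      intro X Y _ _ T hT
      exact hT 0 0 rfl
  | succ k ih =>
      intro X Y hX hY T hT
      haveI := hX; haveI := hY
      rw [push_succ_left]
      have h1 : ⁅⁅X, Y⁆, (⊤ : Subgroup G)⁆ ≤ ⁅⁅Y, ⊤⁆, X⁆ ⊔ ⁅⁅⊤, X⁆, Y⁆ := tsl X Y ⊤
      have h2 : push ⁅⁅X, Y⁆, (⊤ : Subgroup G)⁆ k ≤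
          push (⁅⁅Y, ⊤⁆, X⁆ ⊔ ⁅⁅⊤, X⁆, Y⁆) k := push_mono h1 k
      have h3 : push (⁅⁅Y, (⊤ : Subgroup G)⁆, X⁆ ⊔ ⁅⁅(⊤ : Subgroup G), X⁆, Y⁆) k ≤
          push ⁅⁅Y, (⊤ : Subgroup G)⁆, X⁆ k ⊔ push ⁅⁅(⊤ : Subgroup G), X⁆, Y⁆ k :=
        push_sup_le _ _ k
      have h4 : push ⁅⁅Y, (⊤ : Subgroup G)⁆, X⁆ k ≤ T := by
        rw [Subgroup.commutator_comm]
        refine ih X ⁅Y, ⊤⁆ hX inferInstance T ?_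
        intro a b hab
        have heq : push ⁅Y, (⊤ : Subgroup G)⁆ b = push Y (b + 1) := (push_succ_left Y b).symm
        rw [heq]
        exact hT a (b + 1) (by omega)
      have h5 : push ⁅⁅(⊤ : Subgroup G), X⁆, Y⁆ k ≤ T := by
        refine ih ⁅(⊤ : Subgroup G), X⁆ Y inferInstance hY T ?_
        intro a b hab
        have hle : push ⁅(⊤ : Subgroup G), X⁆ a ≤ push X (a + 1) := by
          rw [push_succ_left]
          exact push_mono (le_of_eq (Subgroup.commutator_comm _ _)) a
        exact le_trans (Subgroup.commutator_mono hle le_rfl) (hT (a + 1) b (by omega))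
      exact le_trans h2 (le_trans h3 (sup_le h4 h5))

/-- The lower central series of `N`, as subgroups of `G` (indexed from `0`,
so `ga N i = γ_{i+1}(N)`). -/
def ga (N : Subgroup G) : ℕ → Subgroup G
  | 0 => N
  | i + 1 => ⁅ga N i, N⁆

variable (N : Subgroup G) [N.Normal]

theorem ga_zero : ga N 0 = N := rfl

theorem ga_succ (i : ℕ) : ga N (i + 1) = ⁅ga N i, N⁆ := rfl

instance ga_normal (i : ℕ) : (ga N i).Normal := by
  induction i with
  | zero => rw [ga_zero]; infer_instance
  | succ i ih => rw [ga_succ]; exact @Subgroup.commutator_normal _ _ _ _ ih inferInstance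

theorem ga_le (i : ℕ) : ga N i ≤ N := by
  induction i with
  | zero => exact le_of_eq (ga_zero N)
  | succ i ih => rw [ga_succ]; exact Subgroup.commutator_le_right _ _

theorem ga_eq (i : ℕ) : ga N i = (Subgroup.lowerCentralSeries (⊤ : Subgroup N) i).map N.subtype := by
  induction i with
  | zero =>
      rw [ga_zero]
      show N = (⊤ : Subgroup N).map N.subtype
      rw [← MonoidHom.range_eq_map, Subgroup.range_subtype]
  | succ i ih =>
      rw [ga_succ]
      show ⁅ga N i, N⁆ = (⁅Subgroup.lowerCentralSeries (⊤ : Subgroup N) i, (⊤ : Subgroup N)⁆).map N.subtype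
      rw [Subgroup.map_commutator, ← ih, ← MonoidHom.range_eq_map, Subgroup.range_subtype]

theorem lemA : ∀ b a, ⁅ga N a, ga N b⁆ ≤ ga N (a + b + 1) := by
  intro b
  induction b with
  | zero => intro a; rw [ga_zero]; exact le_of_eq (ga_succ N a).symm
  | succ b ih =>
      intro a
      rw [ga_succ N b, Subgroup.commutator_comm]
      refine le_trans (tsl (ga N b) N (ga N a)) (sup_le ?_ ?_)
      · rw [Subgroup.commutator_comm N (ga N a), ← ga_succ N a]
        exact le_trans (ih (a + 1)) (le_of_eq (congrArg (ga N) (by omega)))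
      · refine le_trans (Subgroup.commutator_mono (ih a) le_rfl) ?_
        rw [← ga_succ N (a + b + 1)]
        exact le_of_eq (congrArg (ga N) (by omega))

end HallAux

open HallAux Subgroup in
/-- (P. Hall) If `N` is a normal nilpotent subgroup of `G` and `G/γ₂(N)` is
nilpotent (where `γ₂(N) = [N, N]`), then `G` is nilpotent. -/
theorem hall_nilpotency_criterion (G : Type*) [Group G] (N : Subgroup G)
    [N.Normal] (hN : Group.IsNilpotent N)
    (h : Group.IsNilpotent (G ⧸ ⁅N, N⁆)) : Group.IsNilpotent G := by
  classical
  -- get c with ga N c = ⊥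
  obtain ⟨c, hc⟩ := Subgroup.nilpotent_iff_lowerCentralSeries.mp hN
  have hgc : ga N c = ⊥ := by rw [ga_eq, hc, Subgroup.map_bot]
  -- get d with push N d ≤ ga N 1
  obtain ⟨d, hd0⟩ := Subgroup.nilpotent_iff_lowerCentralSeries.mp h
  have hd : push N d ≤ ga N 1 := by
    have h1 : Subgroup.lowerCentralSeries (⊤ : Subgroup G) d ≤ ⁅N, N⁆ := by
      have hmap := lowerCentralSeries.map (QuotientGroup.mk' ⁅N, N⁆) d
      rw [hd0, le_bot_iff, Subgroup.map_eq_bot_iff, QuotientGroup.ker_mk'] at hmap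
      exact hmap
    rw [ga_succ N 0, ga_zero]
    exact le_trans (push_le_lcs N d) h1
  -- main claim: push (ga N i) ((i+1)*d) ≤ ga N (i+1)
  have main : ∀ i, push (ga N i) ((i + 1) * d) ≤ ga N (i + 1) := by
    intro i
    induction i with
    | zero => rw [ga_zero]; simpa using hd
    | succ i ih =>
        conv_lhs => rw [ga_succ N i]
        have hdistrib : (i + 1 + 1) * d = (i + 1) * d + d := by ring
        refine push_commutator_le ((i + 1 + 1) * d) (ga N i) N inferInstance inferInstance _ ?_
        intro a b hab
        by_cases hcase : (i + 1) * d ≤ a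
        · have h1 : push (ga N i) a ≤ ga N (i + 1) := by
            have ha : a = (i + 1) * d + (a - (i + 1) * d) := by omega
            rw [ha, push_add]
            exact le_trans (push_mono ih _) (push_le_self _ _)
          have h2 : push N b ≤ ga N 0 := le_trans (push_le_self _ _) (le_of_eq (ga_zero N).symm)
          refine le_trans (Subgroup.commutator_mono h1 h2) ?_
          exact le_trans (lemA N 0 (i + 1)) (le_of_eq (congrArg (ga N) (by omega)))
        · have hb : b = d + (b - d) := by omega
          have h1 : push N b ≤ ga N 1 := by
            rw [hb, push_add]
            exact le_trans (push_mono hd _) (push_le_self _ _)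
          have h2 : push (ga N i) a ≤ ga N i := push_le_self _ _
          refine le_trans (Subgroup.commutator_mono h2 h1) ?_
          exact le_trans (lemA N 1 i) (le_of_eq (congrArg (ga N) (by omega)))
  -- iterate: ∃ m, push N m ≤ ga N i
  have iter : ∀ i, ∃ m, push N m ≤ ga N i := by
    intro i
    induction i with
    | zero => exact ⟨0, le_of_eq (ga_zero N).symm⟩
    | succ i ih =>
        obtain ⟨m, hm⟩ := ih
        exact ⟨m + (i + 1) * d, by
          rw [push_add]
          exact le_trans (push_mono hm _) (main i)⟩
  obtain ⟨m, hm⟩ := iter c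
  rw [hgc, le_bot_iff] at hm
  -- conclude
  rw [Subgroup.nilpotent_iff_lowerCentralSeries]
  refine ⟨d + m, le_bot_iff.mp ?_⟩
  rw [lcs_add_eq]
  have h2 : push (Subgroup.lowerCentralSeries (⊤ : Subgroup G) d) m ≤ push N m :=
    push_mono (le_trans (le_trans (le_of_eq rfl)
      (by
        have h1 : Subgroup.lowerCentralSeries (⊤ : Subgroup G) d ≤ ⁅N, N⁆ := by
          have hmap := lowerCentralSeries.map (QuotientGroup.mk' ⁅N, N⁆) d
          rw [hd0, le_bot_iff, Subgroup.map_eq_bot_iff, QuotientGroup.ker_mk'] at hmap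
          exact hmap
        exact h1)) (Subgroup.commutator_le_right N N)) m
  rw [hm] at h2
  exact le_bot_iff.mp (le_trans h2 le_rfl) ▸ le_rfl
end

section
/- With G_w as above, G_w/G_w^(k) ≅ H/H^(k), where H is a free group of rank q+1 and X^(k) denotes the k-th derived subgroup. -/
/-! Modulo the `k`-th derived subgroup the word `w` becomes trivial, so the defining relation
reads `a₁ = s⁻¹t⁻¹st`. This is a Tietze move eliminating the generator `a₁`: substituting
`s⁻¹t⁻¹st` for `a₁`, and including the remaining generators `s, t, a₂, …, a_q`, induce mutually
inverse maps between `G_w / G_w^(k)` and the free group on those `q + 1` generators modulo its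
`k`-th derived subgroup. -/

/-- The generator `s` among the `q + 2` generators `s, t, a₁, …, a_q`. -/
def sGen (q : ℕ) : Fin (q + 2) := ⟨0, by omega⟩

/-- The generator `t`. -/
def tGen (q : ℕ) : Fin (q + 2) := ⟨1, by omega⟩

/-- The generator `aᵢ` (for `i : Fin q`, so `a₁` is `aGen q ⟨0, _⟩`). -/
def aGen (q : ℕ) (i : Fin q) : Fin (q + 2) := ⟨i + 2, by omega⟩

/-- The relator `a₁⁻¹ · w · s⁻¹t⁻¹st` of the one-relator group
`G_w = ⟨s, t, a₁, …, a_q ; a₁ = w s⁻¹t⁻¹st⟩`. -/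
def magnusRelator (q : ℕ) (hq : 1 ≤ q) (w : FreeGroup (Fin (q + 2))) :
    FreeGroup (Fin (q + 2)) :=
  (FreeGroup.of (aGen q ⟨0, hq⟩))⁻¹ * w * (FreeGroup.of (sGen q))⁻¹ *
    (FreeGroup.of (tGen q))⁻¹ * FreeGroup.of (sGen q) * FreeGroup.of (tGen q)

attribute [local instance] derivedSeries_normal

section DerivedQuotient

variable {G H : Type*} [Group G] [Group H] (k : ℕ)

theorem derivedSeries_quotient_derivedSeries : derivedSeries (G ⧸ derivedSeries G k) k = ⊥ := by
  rw [← map_derivedSeries_eq (QuotientGroup.mk'_surjective _) k, Subgroup.map_eq_bot_iff,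
    QuotientGroup.ker_mk']

theorem derivedSeries_le_ker_of_derivedSeries_eq_bot (f : G →* H) (hH : derivedSeries H k = ⊥) :
    derivedSeries G k ≤ f.ker := by
  rw [← MonoidHom.comap_bot, ← Subgroup.map_le_iff_le_comap, ← hH]
  exact map_derivedSeries_le_derivedSeries f k

theorem mk_map_eq_one_of_mem_derivedSeries (f : G →* H) {x : G} (hx : x ∈ derivedSeries G k) :
    (f x : H ⧸ derivedSeries H k) = 1 :=
  derivedSeries_le_ker_of_derivedSeries_eq_bot k ((QuotientGroup.mk' _).comp f)
    (derivedSeries_quotient_derivedSeries k) hx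

def derivedQuotientLift (f : G →* H ⧸ derivedSeries H k) :
    G ⧸ derivedSeries G k →* H ⧸ derivedSeries H k :=
  QuotientGroup.lift _ f
    (derivedSeries_le_ker_of_derivedSeries_eq_bot k f (derivedSeries_quotient_derivedSeries k))

@[simp]
theorem derivedQuotientLift_mk (f : G →* H ⧸ derivedSeries H k) (g : G) :
    derivedQuotientLift k f g = f g :=
  rfl

end DerivedQuotient

@[simp]
theorem PresentedGroup.mk_of {α : Type*} (rels : Set (FreeGroup α)) (x : α) :
    PresentedGroup.mk rels (FreeGroup.of x) = PresentedGroup.of x :=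
  rfl

section Elimination

open FreeGroup

variable {n : ℕ} (k : ℕ) (p : Fin (n + 1)) (u : FreeGroup (Fin n))

def eliminationRelator (w : FreeGroup (Fin (n + 1))) : FreeGroup (Fin (n + 1)) :=
  (of p)⁻¹ * (w * map p.succAbove u)

def substGenerator : FreeGroup (Fin (n + 1)) →* FreeGroup (Fin n) :=
  lift (Fin.insertNth p u of)

@[simp]
theorem substGenerator_of_self : substGenerator p u (of p) = u := by
  simp [substGenerator]

@[simp]
theorem substGenerator_of_succAbove (j : Fin n) :
    substGenerator p u (of (p.succAbove j)) = of j := by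
  simp [substGenerator]

@[simp]
theorem substGenerator_map_succAbove (x : FreeGroup (Fin n)) :
    substGenerator p u (map p.succAbove x) = x := by
  suffices (substGenerator p u).comp (map p.succAbove) = MonoidHom.id _ from
    DFunLike.congr_fun this x
  ext j
  simp

variable {w : FreeGroup (Fin (n + 1))}

theorem lift_mk_substGenerator_eq_one (hw : w ∈ derivedSeries _ k) :
    ∀ r ∈ ({eliminationRelator p u w} : Set _),
      lift (fun i ↦ QuotientGroup.mk' (derivedSeries _ k) (substGenerator p u (of i))) r = 1 := by
  rintro _ rfl
  rw [← lift_unique (f := fun i ↦ QuotientGroup.mk' _ (substGenerator p u (of i)))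
    ((QuotientGroup.mk' _).comp (substGenerator p u)) fun _ ↦ rfl]
  simp [eliminationRelator, mk_map_eq_one_of_mem_derivedSeries k _ hw]

def derivedQuotientSubst (hw : w ∈ derivedSeries _ k) :
    PresentedGroup {eliminationRelator p u w} ⧸ derivedSeries _ k →*
      FreeGroup (Fin n) ⧸ derivedSeries _ k :=
  derivedQuotientLift k (PresentedGroup.toGroup (lift_mk_substGenerator_eq_one k p u hw))

def derivedQuotientIncl :
    FreeGroup (Fin n) ⧸ derivedSeries _ k →*
      PresentedGroup {eliminationRelator p u w} ⧸ derivedSeries _ k :=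
  derivedQuotientLift k ((QuotientGroup.mk' _).comp ((PresentedGroup.mk _).comp (map p.succAbove)))

theorem mk_of_eq_mk_map_succAbove (hw : w ∈ derivedSeries _ k) :
    ((PresentedGroup.of p : PresentedGroup {eliminationRelator p u w}) :
        PresentedGroup {eliminationRelator p u w} ⧸ derivedSeries _ k) =
      (PresentedGroup.mk _ (map p.succAbove u) : PresentedGroup {eliminationRelator p u w}) := by
  have hrel : PresentedGroup.of p =
      PresentedGroup.mk {eliminationRelator p u w} (w * map p.succAbove u) :=
    PresentedGroup.mk_eq_mk_of_inv_mul_mem rfl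
  rw [hrel, _root_.map_mul, QuotientGroup.mk_mul,
    mk_map_eq_one_of_mem_derivedSeries k (PresentedGroup.mk _) hw, one_mul]

theorem derivedQuotientSubst_comp_incl (hw : w ∈ derivedSeries _ k) :
    (derivedQuotientSubst k p u hw).comp (derivedQuotientIncl k p u) = MonoidHom.id _ := by
  refine QuotientGroup.monoidHom_ext _ (ext_hom _ _ fun j ↦ ?_)
  simp [derivedQuotientSubst, derivedQuotientIncl]

theorem derivedQuotientIncl_comp_subst (hw : w ∈ derivedSeries _ k) :
    (derivedQuotientIncl k p u).comp (derivedQuotientSubst k p u hw) = MonoidHom.id _ := by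
  refine QuotientGroup.monoidHom_ext _ (PresentedGroup.ext fun i ↦ ?_)
  obtain rfl | ⟨j, rfl⟩ := Fin.eq_self_or_eq_succAbove p i
  · simpa [derivedQuotientSubst, derivedQuotientIncl] using
      (mk_of_eq_mk_map_succAbove k _ u hw).symm
  · simp [derivedQuotientSubst, derivedQuotientIncl]

def derivedQuotientEliminationEquiv (hw : w ∈ derivedSeries _ k) :
    PresentedGroup {eliminationRelator p u w} ⧸ derivedSeries _ k ≃*
      FreeGroup (Fin n) ⧸ derivedSeries _ k :=
  MonoidHom.toMulEquiv _ _ (derivedQuotientIncl_comp_subst k p u hw)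
    (derivedQuotientSubst_comp_incl k p u hw)

end Elimination

open FreeGroup in
theorem magnusRelator_eq_eliminationRelator (q : ℕ) (hq : 1 ≤ q) (w : FreeGroup (Fin (q + 2))) :
    magnusRelator q hq w = eliminationRelator (aGen q ⟨0, hq⟩)
      ((of ⟨0, by omega⟩)⁻¹ * (of ⟨1, by omega⟩)⁻¹ * of ⟨0, by omega⟩ * of ⟨1, by omega⟩) w := by
  have hs : (aGen q ⟨0, hq⟩).succAbove ⟨0, by omega⟩ = sGen q := rfl
  have ht : (aGen q ⟨0, hq⟩).succAbove ⟨1, by omega⟩ = tGen q := rfl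
  simp only [magnusRelator, eliminationRelator, _root_.map_mul, _root_.map_inv, map.of, hs, ht,
    mul_assoc]

theorem Gw_derived_quotient_iso_general (q : ℕ) (hq : 1 ≤ q) (k : ℕ)
    (w : FreeGroup (Fin (q + 2)))
    (hk : w ∈ derivedSeries (FreeGroup (Fin (q + 2))) k) :
    letI Gw := PresentedGroup ({magnusRelator q hq w} : Set (FreeGroup (Fin (q + 2))))
    letI := derivedSeries_normal Gw k
    letI := derivedSeries_normal (FreeGroup (Fin (q + 1))) k
    Nonempty ((Gw ⧸ derivedSeries Gw k) ≃*
      (FreeGroup (Fin (q + 1)) ⧸ derivedSeries (FreeGroup (Fin (q + 1))) k)) := by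
  rw [magnusRelator_eq_eliminationRelator]
  exact ⟨derivedQuotientEliminationEquiv k _ _ hk⟩

/-- With `G_w = ⟨s, t, a₁, …, a_q ; a₁ = w s⁻¹t⁻¹st⟩`, where `w` involves `a₁`,
does not involve `s`, and lies in the `k`-th derived subgroup,
`G_w / G_w^(k) ≅ H / H^(k)` where `H` is free of rank `q + 1`. -/
theorem Gw_derived_quotient_iso (q : ℕ) (hq : 1 ≤ q) (k : ℕ)
    (w : FreeGroup (Fin (q + 2)))
    (ha : aGen q ⟨0, hq⟩ ∈ w.toWord.map Prod.fst)
    (hs : sGen q ∉ w.toWord.map Prod.fst)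
    (hk : w ∈ derivedSeries (FreeGroup (Fin (q + 2))) k) :
    letI Gw := PresentedGroup ({magnusRelator q hq w} : Set (FreeGroup (Fin (q + 2))))
    letI := derivedSeries_normal Gw k
    letI := derivedSeries_normal (FreeGroup (Fin (q + 1))) k
    Nonempty ((Gw ⧸ derivedSeries Gw k) ≃*
      (FreeGroup (Fin (q + 1)) ⧸ derivedSeries (FreeGroup (Fin (q + 1))) k)) :=
  Gw_derived_quotient_iso_general q hq k w hk
end
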